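/- arXiv:1509.05635 — 2 statements merged into one kernel-verified Lean document; each statement's English description precedes it below -/
import Mathlib

section
/- Let T be a finite tree with a set X of terminal pairs of edges, and let T_M be the once-subdivided tree as above. If E' is a multicut of T_M with respect to {(n_e, n_f) : {e,f} ∈ X}, then in each connected component of T_M − E', the set of original edges e of T with n_e in that component forms a connected subtree of T containing no terminal pair of edges. -/
/-! Every vertex of `T_M` stands for one or two vertices of `T`: `n_v` for `v`, and `n_e` for
the two ends of `e`. Within a component of `T_M − E'`, the vertices of `T` that two adjacent
vertices stand for are joined by an edge `e` of the component, so following a path of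
`T_M − E'` between `n_e` and `n_f` yields a path in the subgraph of `T` spanned by the edges of
the component. That no terminal pair lies in one component is the multicut property itself. -/

/-- The once-subdivided tree `T_M`: one vertex for each vertex of `T`
(as `Sum.inl v`) and one for each edge of `T` (as `Sum.inr e`), with
`n_v` adjacent to `n_e` exactly when `v` is an endpoint of `e`. -/
def subdiv {V : Type*} (T : SimpleGraph V) : SimpleGraph (V ⊕ T.edgeSet) :=
  SimpleGraph.fromRel (fun a b =>
    ∃ (v : V) (e : T.edgeSet), a = Sum.inl v ∧ b = Sum.inr e ∧ v ∈ (e : Sym2 V))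

/-- The edges of `T` whose subdivision vertices lie in the connected component
of `w` in `T_M` minus the multicut `E'`. -/
def compEdges {V : Type*} (T : SimpleGraph V) (E' : Set (Sym2 (V ⊕ T.edgeSet)))
    (w : V ⊕ T.edgeSet) : Set (Sym2 V) :=
  {g | ∃ hg : g ∈ T.edgeSet,
    ((subdiv T).deleteEdges E').Reachable w (Sum.inr ⟨g, hg⟩)}

theorem SimpleGraph.reachable_fromEdgeSet_of_mem {V : Type*} {s : Set (Sym2 V)} {e : Sym2 V}
    (he : e ∈ s) {u v : V} (hu : u ∈ e) (hv : v ∈ e) : (fromEdgeSet s).Reachable u v := by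
  obtain rfl | huv := eq_or_ne u v
  · rfl
  · refine Adj.reachable ((fromEdgeSet_adj s).2 ⟨?_, huv⟩)
    rwa [← (Sym2.mem_and_mem_iff huv).1 ⟨hu, hv⟩]

namespace subdiv

variable {V : Type*} {T : SimpleGraph V} {E' : Set (Sym2 (V ⊕ T.edgeSet))}
  {w a b : V ⊕ T.edgeSet} {u v : V}

def anchors : V ⊕ T.edgeSet → Set V :=
  Sum.elim (fun v => {v}) (fun e => {x | x ∈ (e : Sym2 V)})

theorem anchors_nonempty (a : V ⊕ T.edgeSet) : (anchors a).Nonempty := by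
  cases a with
  | inl v => exact ⟨v, rfl⟩
  | inr e => exact ⟨_, Sym2.out_fst_mem (e : Sym2 V)⟩

theorem reachable_of_mem_anchors (hwa : ((subdiv T).deleteEdges E').Reachable w a)
    (hu : u ∈ anchors a) (hv : v ∈ anchors a) :
    (SimpleGraph.fromEdgeSet (compEdges T E' w)).Reachable u v := by
  cases a with
  | inl x =>
    obtain ⟨rfl, rfl⟩ : u = x ∧ v = x := ⟨hu, hv⟩
    rfl
  | inr e =>
    exact SimpleGraph.reachable_fromEdgeSet_of_mem (s := compEdges T E' w) ⟨e.2, hwa⟩ hu hv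

theorem reachable_of_adj_of_mem_anchors (hwa : ((subdiv T).deleteEdges E').Reachable w a)
    (hab : ((subdiv T).deleteEdges E').Adj a b) (hu : u ∈ anchors a) (hv : v ∈ anchors b) :
    (SimpleGraph.fromEdgeSet (compEdges T E' w)).Reachable u v := by
  have hwb := hwa.trans hab.reachable
  obtain ⟨-, ⟨x, e, rfl, rfl, hxe⟩ | ⟨x, e, rfl, rfl, hxe⟩⟩ := hab.1
  · obtain rfl : u = x := hu
    exact reachable_of_mem_anchors hwb hxe hv
  · obtain rfl : v = x := hv
    exact reachable_of_mem_anchors hwa hu hxe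

theorem reachable_of_walk_of_mem_anchors (p : ((subdiv T).deleteEdges E').Walk a b)
    (hwa : ((subdiv T).deleteEdges E').Reachable w a)
    (hu : u ∈ anchors a) (hv : v ∈ anchors b) :
    (SimpleGraph.fromEdgeSet (compEdges T E' w)).Reachable u v := by
  induction p generalizing u with
  | nil => exact reachable_of_mem_anchors hwa hu hv
  | cons hac _ ih =>
    obtain ⟨y, hy⟩ := anchors_nonempty _
    exact (reachable_of_adj_of_mem_anchors hwa hac hu hy).trans
      (ih (hwa.trans hac.reachable) hy hv)

end subdiv

theorem stmt_9_general {V : Type*}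
    (T : SimpleGraph V)
    (X : Sym2 V → Sym2 V → Prop)
    (E' : Set (Sym2 (V ⊕ T.edgeSet)))
    (hcut : ∀ e f : T.edgeSet, X ↑e ↑f →
      ¬((subdiv T).deleteEdges E').Reachable (Sum.inr e) (Sum.inr f)) :
    ∀ w : V ⊕ T.edgeSet,
      (∀ u v : V,
        (∃ g ∈ compEdges T E' w, u ∈ g) → (∃ g ∈ compEdges T E' w, v ∈ g) →
        (SimpleGraph.fromEdgeSet (compEdges T E' w)).Reachable u v) ∧
      (∀ g ∈ compEdges T E' w, ∀ h ∈ compEdges T E' w, ¬X g h) := by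
  intro w
  constructor
  · rintro u v ⟨g, ⟨hg, hwg⟩, hug⟩ ⟨h, ⟨hh, hwh⟩, hvh⟩
    obtain ⟨p⟩ := hwg.symm.trans hwh
    exact subdiv.reachable_of_walk_of_mem_anchors p hwg hug hvh
  · rintro g ⟨hg, hwg⟩ h ⟨hh, hwh⟩ hgh
    exact hcut ⟨g, hg⟩ ⟨h, hh⟩ hgh (hwg.symm.trans hwh)

/-- If `E'` is a multicut of the once-subdivided tree `T_M` with
respect to the terminal pairs coming from `X`, then in each connected component
of `T_M − E'` the set of original edges of `T` whose subdivision vertices lie in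
that component forms a connected subtree of `T` containing no terminal pair. -/
theorem stmt_9 {V : Type*} [Fintype V] [DecidableEq V]
    (T : SimpleGraph V) (hT : T.IsTree)
    (X : Sym2 V → Sym2 V → Prop) (hX : Symmetric X)
    (E' : Set (Sym2 (V ⊕ T.edgeSet)))
    (hcut : ∀ e f : T.edgeSet, X ↑e ↑f →
      ¬((subdiv T).deleteEdges E').Reachable (Sum.inr e) (Sum.inr f)) :
    ∀ w : V ⊕ T.edgeSet,
      (∀ u v : V,
        (∃ g ∈ compEdges T E' w, u ∈ g) → (∃ g ∈ compEdges T E' w, v ∈ g) →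
        (SimpleGraph.fromEdgeSet (compEdges T E' w)).Reachable u v) ∧
      (∀ g ∈ compEdges T E' w, ∀ h ∈ compEdges T E' w, ¬X g h) :=
  stmt_9_general T X E' hcut
end

section
/- Let γ : [0,1] → ℝ² be a piecewise-linear path with vertices p₀, …, p_k (traversed in order), and suppose γ is increasing-chord. Then for every i, the closed halfplane {x ∈ ℝ² : ⟨x − p_{i+1}, p_{i+1} − p_i⟩ ≥ 0} contains all subsequent vertices p_j with j ≥ i + 1. -/
open scoped RealInnerProductSpace

/-!
Let `i + 1 ≤ j`. For every point `w` of the segment `[p i, p (i+1)]`, the increasing-chord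
property applied to the chord from `w` to `p j`, which contains the subchord from `p (i+1)`
to `p j`, gives `dist (p (i+1)) (p j) ≤ dist w (p j)`. So `p (i+1)` is the nearest point
of that segment to `p j`, and the variational characterisation of nearest points in a
convex set gives `⟪p j - p (i+1), p i - p (i+1)⟫ ≤ 0`.
-/

theorem real_inner_sub_nonneg_of_forall_mem_segment_dist_le {F : Type*}
    [NormedAddCommGroup F] [InnerProductSpace ℝ F] {x y z : F}
    (h : ∀ w ∈ segment ℝ x y, dist y z ≤ dist w z) : 0 ≤ ⟪z - y, y - x⟫ := by
  let y' : segment ℝ x y := ⟨y, right_mem_segment ℝ x y⟩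
  have : Nonempty (segment ℝ x y) := ⟨y'⟩
  have hmin : ‖z - y‖ = ⨅ w : segment ℝ x y, ‖z - w‖ := by
    simp only [← dist_eq_norm, dist_comm z]
    refine le_antisymm (le_ciInf fun w => h w w.2) (ciInf_le ?_ y')
    exact ⟨0, Set.forall_mem_range.2 fun _ => dist_nonneg⟩
  have hx := (norm_eq_iInf_iff_real_inner_le_zero (convex_segment x y)
    (right_mem_segment ℝ x y)).1 hmin x (left_mem_segment ℝ x y)
  rw [← neg_sub y x, inner_neg_right] at hx
  linarith

theorem stmt_15_general (k : ℕ) (p : ℕ → EuclideanSpace ℝ (Fin 2)) (τ : ℕ → ℝ)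
    (γ : ℝ → EuclideanSpace ℝ (Fin 2))
    (hτ0 : τ 0 = 0) (hτk : τ k = 1)
    (hmono : ∀ i < k, τ i < τ (i + 1))
    (hvert : ∀ i ≤ k, γ (τ i) = p i)
    (haff : ∀ i < k, ∀ s : ℝ, 0 ≤ s → s ≤ 1 →
      γ ((1 - s) * τ i + s * τ (i + 1)) = (1 - s) • p i + s • p (i + 1))
    (hic : ∀ a b c d : ℝ, 0 ≤ a → a ≤ b → b ≤ c → c ≤ d → d ≤ 1 →
      dist (γ b) (γ c) ≤ dist (γ a) (γ d)) :
    ∀ i j : ℕ, i < k → i + 1 ≤ j → j ≤ k →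
      0 ≤ ⟪p j - p (i + 1), p (i + 1) - p i⟫ := by
  intro i j hik hij hjk
  have hτ : MonotoneOn τ (Set.Iic k) :=
    monotoneOn_of_le_add_one Set.ordConnected_Iic fun a _ _ ha => (hmono a ha).le
  have hτi : 0 ≤ τ i := hτ0 ▸ hτ (Nat.zero_le k) hik.le (Nat.zero_le i)
  have hτij : τ (i + 1) ≤ τ j := hτ hik hjk hij
  have hτj : τ j ≤ 1 := hτk ▸ hτ hjk (Set.mem_Iic.2 le_rfl) hjk
  have hτstep := hmono i hik
  apply real_inner_sub_nonneg_of_forall_mem_segment_dist_le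
  rw [segment_eq_image_lineMap]
  rintro _ ⟨s, ⟨hs0, hs1⟩, rfl⟩
  have hchord := hic ((1 - s) * τ i + s * τ (i + 1)) (τ (i + 1)) (τ j) (τ j)
    (by nlinarith) (by nlinarith) hτij le_rfl hτj
  rwa [hvert _ hik, hvert j hjk, haff i hik s hs0 hs1, ← AffineMap.lineMap_apply_module] at hchord

/-- If a piecewise-linear path `γ : [0,1] → ℝ²` with breakpoints
`p 0, …, p k` (at parameters `τ 0 < … < τ k`, consecutive breakpoints distinct)
is increasing-chord, then for every `i < k` the closed halfplane
`{x : ⟪x − p (i+1), p (i+1) − p i⟫ ≥ 0}` contains all later vertices `p j`,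
`j ≥ i + 1`. -/
theorem stmt_15 (k : ℕ) (p : ℕ → EuclideanSpace ℝ (Fin 2)) (τ : ℕ → ℝ)
    (γ : ℝ → EuclideanSpace ℝ (Fin 2))
    (hτ0 : τ 0 = 0) (hτk : τ k = 1)
    (hmono : ∀ i < k, τ i < τ (i + 1))
    (hne : ∀ i < k, p i ≠ p (i + 1))
    (hvert : ∀ i ≤ k, γ (τ i) = p i)
    (haff : ∀ i < k, ∀ s : ℝ, 0 ≤ s → s ≤ 1 →
      γ ((1 - s) * τ i + s * τ (i + 1)) = (1 - s) • p i + s • p (i + 1))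
    (hic : ∀ a b c d : ℝ, 0 ≤ a → a ≤ b → b ≤ c → c ≤ d → d ≤ 1 →
      dist (γ b) (γ c) ≤ dist (γ a) (γ d)) :
    ∀ i j : ℕ, i < k → i + 1 ≤ j → j ≤ k →
      0 ≤ ⟪p j - p (i + 1), p (i + 1) - p i⟫ :=
  stmt_15_general k p τ γ hτ0 hτk hmono hvert haff hic
end
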